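/- Let N be a prime and let p, q, r > 1 be natural numbers such that each pair among {p, q, r} satisfies a divisibility condition (one divides the other). Then the number M of triples (x, y, z) ∈ (ℤ/Nℤ)³ with x^p + y^q ≡ z^r (mod N) satisfies M ≥ N² − (2N)^{3/2}·p·q·r. -/

import Mathlib

/-!
With `S_e(t) = ∑ₓ ψ(t xᵉ)` for a primitive additive character `ψ` of a finite field of size `n`,
orthogonality of characters gives `n · M = ∑ₜ S_p(t) S_q(t) conj (S_r(t))`, and the term `t = 0`
is `n³`. For `t ≠ 0`, `S_e` is constant on the orbit `{t sᵉ : s ≠ 0}`, which covers each point at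
most `e` times, so `(n - 1) |S_e(t)|² ≤ e ∑ᵤ |S_e(u)|² ≤ e² n²` (the mean square counts solutions
of `xᵉ = yᵉ`); hence `|S_r(t)| ≤ r √(2n)`. Cauchy–Schwarz bounds the rest,
`∑ₜ |S_p(t)| |S_q(t)| ≤ p q n²`.
-/

open Finset ComplexConjugate

theorem card_filter_pow_eq_le {R : Type*} [CommRing R] [IsDomain R] [Fintype R] [DecidableEq R]
    {e : ℕ} (he : 0 < e) (w : R) : #{x : R | x ^ e = w} ≤ e := by
  have hsub : ({x : R | x ^ e = w} : Finset R) ⊆ Polynomial.nthRootsFinset e w := fun x hx =>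
    (Polynomial.mem_nthRootsFinset he w).2 (mem_filter.1 hx).2
  calc #{x : R | x ^ e = w} ≤ #(Polynomial.nthRootsFinset e w) := card_le_card hsub
    _ ≤ Multiset.card (Polynomial.nthRoots e w) := by
        rw [Polynomial.nthRootsFinset_def]; exact Multiset.toFinset_card_le _
    _ ≤ e := Polynomial.card_nthRoots e w

theorem sum_comp_le_mul_sum {α β : Type*} [Fintype α] [Fintype β] [DecidableEq β] {φ : α → β}
    {e : ℕ} (hφ : ∀ b, #{a | φ a = b} ≤ e) {g : β → ℝ} (hg : ∀ b, 0 ≤ g b) :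
    ∑ a, g (φ a) ≤ e * ∑ b, g b := by
  rw [← sum_fiberwise' univ φ g, mul_sum]
  refine sum_le_sum fun b _ => ?_
  rw [sum_const, nsmul_eq_mul]
  exact mul_le_mul_of_nonneg_right (by exact_mod_cast hφ b) (hg b)

section MonomialSum

variable {F : Type*} [Field F] [Fintype F] {ψ : AddChar F ℂ}

theorem sum_sum_addChar_mul [DecidableEq F] {α : Type*} [Fintype α] (hψ : ψ.IsPrimitive)
    (f : α → F) :
    ∑ t, ∑ a, ψ (t * f a) = Fintype.card F * #{a | f a = 0} := by
  rw [sum_comm, card_filter, Nat.cast_sum, mul_sum]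
  refine sum_congr rfl fun a _ => ?_
  rw [AddChar.sum_mulShift _ hψ]
  split_ifs <;> simp

def monomialSum (ψ : AddChar F ℂ) (e : ℕ) (t : F) : ℂ :=
  ∑ x, ψ (t * x ^ e)

theorem monomialSum_zero (e : ℕ) : monomialSum ψ e 0 = Fintype.card F := by
  simp [monomialSum]

theorem conj_monomialSum (e : ℕ) (t : F) : conj (monomialSum ψ e t) = monomialSum ψ e (-t) := by
  simp only [monomialSum, map_sum, ← AddChar.map_neg_eq_conj, neg_mul]

theorem monomialSum_mul_pow {s : F} (hs : s ≠ 0) (e : ℕ) (t : F) :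
    monomialSum ψ e (t * s ^ e) = monomialSum ψ e t :=
  Fintype.sum_equiv (Equiv.mulLeft₀ s hs) _ _ fun x => by
    simp only [Equiv.mulLeft₀_apply, mul_pow, mul_assoc]

variable [DecidableEq F]

theorem sum_monomialSum_mul_mul_conj (hψ : ψ.IsPrimitive) (p q r : ℕ) :
    ∑ t, monomialSum ψ p t * monomialSum ψ q t * conj (monomialSum ψ r t) =
      Fintype.card F * #{v : F × F × F | v.1 ^ p + v.2.1 ^ q = v.2.2 ^ r} := by
  have hexpand : ∀ t, monomialSum ψ p t * monomialSum ψ q t * conj (monomialSum ψ r t) =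
      ∑ v : F × F × F, ψ (t * (v.1 ^ p + v.2.1 ^ q - v.2.2 ^ r)) := fun t => by
    have hsplit : ∀ v : F × F × F, ψ (t * (v.1 ^ p + v.2.1 ^ q - v.2.2 ^ r)) =
        ψ (t * v.1 ^ p) * ψ (t * v.2.1 ^ q) * ψ (-t * v.2.2 ^ r) := fun v => by
      rw [← AddChar.map_add_eq_mul, ← AddChar.map_add_eq_mul]; ring_nf
    rw [conj_monomialSum]
    simp only [hsplit, monomialSum, Fintype.sum_prod_type, ← sum_mul, ← mul_sum]
  simp only [hexpand, sum_sum_addChar_mul hψ, sub_eq_zero]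

theorem sum_norm_monomialSum_sq (hψ : ψ.IsPrimitive) (e : ℕ) :
    ∑ t, ‖monomialSum ψ e t‖ ^ 2 = Fintype.card F * #{v : F × F | v.1 ^ e = v.2 ^ e} := by
  have hexpand : ∀ t, (‖monomialSum ψ e t‖ ^ 2 : ℂ) =
      ∑ v : F × F, ψ (t * (v.1 ^ e - v.2 ^ e)) := fun t => by
    have hsplit : ∀ v : F × F, ψ (t * (v.1 ^ e - v.2 ^ e)) = ψ (t * v.1 ^ e) * ψ (-t * v.2 ^ e) :=
      fun v => by rw [← AddChar.map_add_eq_mul]; ring_nf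
    rw [← Complex.mul_conj', conj_monomialSum]
    simp only [hsplit, monomialSum, Fintype.sum_prod_type, ← sum_mul, ← mul_sum]
  have h : ((∑ t, ‖monomialSum ψ e t‖ ^ 2 : ℝ) : ℂ) =
      Fintype.card F * #{v : F × F | v.1 ^ e = v.2 ^ e} := by
    simp only [Complex.ofReal_sum, Complex.ofReal_pow, hexpand, sum_sum_addChar_mul hψ,
      sub_eq_zero]
  exact_mod_cast h

theorem sum_norm_monomialSum_sq_le (hψ : ψ.IsPrimitive) {e : ℕ} (he : 0 < e) :
    ∑ t, ‖monomialSum ψ e t‖ ^ 2 ≤ e * Fintype.card F ^ 2 := by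
  have hcount : #{v : F × F | v.1 ^ e = v.2 ^ e} ≤ e * Fintype.card F :=
    calc #{v : F × F | v.1 ^ e = v.2 ^ e} = ∑ y : F, #{x : F | x ^ e = y ^ e} := by
          simp only [card_filter, Fintype.sum_prod_type_right]
      _ ≤ ∑ _y : F, e := sum_le_sum fun y _ => card_filter_pow_eq_le he _
      _ = e * Fintype.card F := by rw [sum_const, card_univ, smul_eq_mul, mul_comm]
  rw [sum_norm_monomialSum_sq hψ]
  calc (Fintype.card F : ℝ) * #{v : F × F | v.1 ^ e = v.2 ^ e}
      ≤ Fintype.card F * (e * Fintype.card F) := by gcongr; exact_mod_cast hcount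
    _ = e * Fintype.card F ^ 2 := by ring

theorem card_sub_one_mul_norm_monomialSum_sq_le {e : ℕ} (he : 0 < e) {t : F} (ht : t ≠ 0) :
    (Fintype.card F - 1 : ℝ) * ‖monomialSum ψ e t‖ ^ 2 ≤ e * ∑ u, ‖monomialSum ψ e u‖ ^ 2 := by
  have hfiber : ∀ u, #{s : F | t * s ^ e = u} ≤ e := fun u => by
    simpa only [eq_inv_mul_iff_mul_eq₀ ht] using card_filter_pow_eq_le he (t⁻¹ * u)
  calc (Fintype.card F - 1 : ℝ) * ‖monomialSum ψ e t‖ ^ 2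
      = ∑ s ∈ univ.erase 0, ‖monomialSum ψ e (t * s ^ e)‖ ^ 2 := by
        rw [sum_congr rfl fun s hs => by rw [monomialSum_mul_pow (ne_of_mem_erase hs)],
          sum_const, card_erase_of_mem (mem_univ _), card_univ, nsmul_eq_mul,
          Nat.cast_pred Fintype.card_pos]
    _ ≤ ∑ s, ‖monomialSum ψ e (t * s ^ e)‖ ^ 2 :=
        sum_le_sum_of_subset_of_nonneg (subset_univ _) fun _ _ _ => by positivity
    _ ≤ e * ∑ u, ‖monomialSum ψ e u‖ ^ 2 :=
        sum_comp_le_mul_sum (g := fun u => ‖monomialSum ψ e u‖ ^ 2) hfiber fun _ => by positivity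

theorem norm_monomialSum_le (hψ : ψ.IsPrimitive) {e : ℕ} (he : 0 < e) {t : F} (ht : t ≠ 0) :
    ‖monomialSum ψ e t‖ ≤ e * √(2 * Fintype.card F) := by
  have hn : (2 : ℝ) ≤ Fintype.card F := by exact_mod_cast Fintype.one_lt_card (α := F)
  set n : ℝ := (Fintype.card F : ℝ)
  have hmoment : (n - 1) * ‖monomialSum ψ e t‖ ^ 2 ≤ e * (e * n ^ 2) :=
    (card_sub_one_mul_norm_monomialSum_sq_le he ht).trans
      (mul_le_mul_of_nonneg_left (sum_norm_monomialSum_sq_le hψ he) (by positivity))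
  have hsq : ‖monomialSum ψ e t‖ ^ 2 ≤ e ^ 2 * (2 * n) := by
    refine le_of_mul_le_mul_left (hmoment.trans ?_) (by linarith : 0 < n - 1)
    nlinarith [mul_nonneg (mul_nonneg (sq_nonneg (e : ℝ)) (by linarith : 0 ≤ n))
      (by linarith : 0 ≤ n - 2)]
  refine le_of_pow_le_pow_left₀ two_ne_zero (by positivity) ?_
  rwa [mul_pow, Real.sq_sqrt (by positivity)]

theorem sum_norm_mul_norm_monomialSum_le (hψ : ψ.IsPrimitive) {p q : ℕ} (hp : 0 < p)
    (hq : 0 < q) :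
    ∑ t, ‖monomialSum ψ p t‖ * ‖monomialSum ψ q t‖ ≤ p * q * Fintype.card F ^ 2 := by
  have hL2 : ∀ {e : ℕ}, 0 < e → √(∑ t, ‖monomialSum ψ e t‖ ^ 2) ≤ e * Fintype.card F :=
    fun {e} he => by
      have he1 : (1 : ℝ) ≤ e := by exact_mod_cast he
      refine Real.sqrt_le_iff.2 ⟨by positivity, (sum_norm_monomialSum_sq_le hψ he).trans ?_⟩
      nlinarith [sq_nonneg (Fintype.card F : ℝ)]
  calc ∑ t, ‖monomialSum ψ p t‖ * ‖monomialSum ψ q t‖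
      ≤ √(∑ t, ‖monomialSum ψ p t‖ ^ 2) * √(∑ t, ‖monomialSum ψ q t‖ ^ 2) :=
        Real.sum_mul_le_sqrt_mul_sqrt _ _ _
    _ ≤ (p * Fintype.card F) * (q * Fintype.card F) :=
        mul_le_mul (hL2 hp) (hL2 hq) (Real.sqrt_nonneg _) (by positivity)
    _ = p * q * Fintype.card F ^ 2 := by ring

theorem card_mul_card_pow_add_pow_eq_pow (hψ : ψ.IsPrimitive) (p q r : ℕ) :
    (Fintype.card F * #{v : F × F × F | v.1 ^ p + v.2.1 ^ q = v.2.2 ^ r} : ℂ) =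
      Fintype.card F ^ 3 + ∑ t ∈ univ.erase 0,
        monomialSum ψ p t * monomialSum ψ q t * conj (monomialSum ψ r t) := by
  rw [← sum_monomialSum_mul_mul_conj hψ, ← add_sum_erase _ _ (mem_univ 0), monomialSum_zero,
    monomialSum_zero, monomialSum_zero, map_natCast]
  ring

theorem sq_sub_le_card_pow_add_pow_eq_pow (hψ : ψ.IsPrimitive) {p q r : ℕ} (hp : 0 < p)
    (hq : 0 < q) (hr : 0 < r) :
    (Fintype.card F : ℝ) ^ 2 - √(2 * Fintype.card F) * Fintype.card F * p * q * r ≤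
      #{v : F × F × F | v.1 ^ p + v.2.1 ^ q = v.2.2 ^ r} := by
  set n : ℝ := (Fintype.card F : ℝ)
  set M : ℝ := (#{v : F × F × F | v.1 ^ p + v.2.1 ^ q = v.2.2 ^ r} : ℝ)
  set a : ℕ → F → ℝ := fun e t => ‖monomialSum ψ e t‖
  have herror : n ^ 3 - n * M ≤ ∑ t ∈ univ.erase 0, a p t * a q t * a r t :=
    calc n ^ 3 - n * M ≤ ‖((n ^ 3 - n * M : ℝ) : ℂ)‖ := by
          rw [Complex.norm_real, Real.norm_eq_abs]; exact le_abs_self _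
      _ = ‖-∑ t ∈ univ.erase 0,
            monomialSum ψ p t * monomialSum ψ q t * conj (monomialSum ψ r t)‖ := by
          simp only [n, M]
          push_cast
          rw [card_mul_card_pow_add_pow_eq_pow hψ, sub_add_cancel_left]
      _ ≤ ∑ t ∈ univ.erase 0, a p t * a q t * a r t := by
          rw [norm_neg]
          refine (norm_sum_le _ _).trans_eq (sum_congr rfl fun t _ => ?_)
          rw [norm_mul, norm_mul, Complex.norm_conj]
  have hbound : ∑ t ∈ univ.erase 0, a p t * a q t * a r t ≤ p * q * n ^ 2 * (r * √(2 * n)) :=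
    calc ∑ t ∈ univ.erase 0, a p t * a q t * a r t
        ≤ ∑ t ∈ univ.erase 0, a p t * a q t * (r * √(2 * n)) :=
          sum_le_sum fun t ht => mul_le_mul_of_nonneg_left
            (norm_monomialSum_le hψ hr (ne_of_mem_erase ht)) (by positivity)
      _ ≤ (∑ t, a p t * a q t) * (r * √(2 * n)) := by
          rw [← sum_mul]
          gcongr
          exact subset_univ _
      _ ≤ p * q * n ^ 2 * (r * √(2 * n)) := by
          gcongr; exact sum_norm_mul_norm_monomialSum_le hψ hp hq
  have hn : 0 < n := by positivity
  refine le_of_mul_le_mul_left ?_ hn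
  nlinarith [herror.trans hbound]

end MonomialSum

theorem stmt_10_general (N : ℕ) (hN : N.Prime) (p q r : ℕ) (hp : 1 < p) (hq : 1 < q) (hr : 1 < r) :
    (Nat.card {xyz : ZMod N × ZMod N × ZMod N //
        xyz.1 ^ p + xyz.2.1 ^ q = xyz.2.2 ^ r} : ℝ) ≥
      (N : ℝ) ^ 2 - (2 * N : ℝ) ^ ((3 : ℝ) / 2) * p * q * r := by
  have : Fact N.Prime := ⟨hN⟩
  have hbound := sq_sub_le_card_pow_add_pow_eq_pow (ZMod.isPrimitive_stdAddChar N)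
    (by omega : 0 < p) (by omega : 0 < q) (by omega : 0 < r)
  rw [ZMod.card] at hbound
  rw [Nat.card_eq_fintype_card, Fintype.card_subtype, ge_iff_le]
  refine le_trans ?_ hbound
  have hpow : (2 * N : ℝ) ^ ((3 : ℝ) / 2) = 2 * N * √(2 * N) := by
    rw [show (3 : ℝ) / 2 = 1 + 1 / 2 by norm_num, Real.rpow_add (by positivity [hN.pos]),
      Real.rpow_one, ← Real.sqrt_eq_rpow]
  rw [hpow]
  have hpos : 0 ≤ √(2 * N) * N * p * q * r := by positivity
  linarith [show 2 * N * √(2 * N) * p * q * r = 2 * (√(2 * N) * N * p * q * r) by ring]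

theorem stmt_10 (N : ℕ) (hN : N.Prime) (p q r : ℕ) (hp : 1 < p) (hq : 1 < q) (hr : 1 < r)
    (h1 : q ∣ r ∨ r ∣ q) (h2 : p ∣ r ∨ r ∣ p) (h3 : q ∣ p ∨ p ∣ q) :
    (Nat.card {xyz : ZMod N × ZMod N × ZMod N //
        xyz.1 ^ p + xyz.2.1 ^ q = xyz.2.2 ^ r} : ℝ) ≥
      (N : ℝ) ^ 2 - (2 * N : ℝ) ^ ((3 : ℝ) / 2) * p * q * r :=
  stmt_10_general N hN p q r hp hq hr
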